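/- arXiv:2111.01873 — 2 statements merged into one kernel-verified Lean document; each statement's English description precedes it below -/
import Mathlib

section
/- If matrices A ∈ ℝ^{m×n} and B ∈ ℝ^{n×p} satisfy A_lo ≤ A ≤ A_up and B_lo ≤ B ≤ B_up entrywise, then A_lo⁺B_lo⁺ − A_up⁺B_lo⁻ − A_lo⁻B_up⁺ + A_up⁻B_up⁻ ≤ AB ≤ A_up⁺B_up⁺ − A_lo⁺B_up⁻ − A_up⁻B_lo⁺ + A_lo⁻B_lo⁻ entrywise. -/
/-- Entrywise positive part of a matrix. -/
noncomputable def matPos {m n : ℕ} (M : Matrix (Fin m) (Fin n) ℝ) : Matrix (Fin m) (Fin n) ℝ :=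
  M.map (fun a => max a 0)

/-- Entrywise negative part: M⁻ = M⁺ − M. -/
noncomputable def matNeg {m n : ℕ} (M : Matrix (Fin m) (Fin n) ℝ) : Matrix (Fin m) (Fin n) ℝ :=
  matPos M - M

/-!
Split each factor as `a = a⁺ - a⁻`, so `a b = a⁺b⁺ - a⁺b⁻ - a⁻b⁺ + a⁻b⁻` with all four products of
nonnegative numbers. Since `x ↦ x⁺` is monotone and `x ↦ x⁻` antitone, each product is bounded
above and below by evaluating its factors at the appropriate interval endpoints; summing over the
inner index gives the matrix bounds.
-/

section IntervalMul

variable {α : Type*} [Ring α] [Lattice α] [IsOrderedRing α]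

theorem mul_eq_posPart_negPart (a b : α) :
    a * b = a⁺ * b⁺ - a⁺ * b⁻ - a⁻ * b⁺ + a⁻ * b⁻ := by
  conv_lhs => rw [← posPart_sub_negPart a, ← posPart_sub_negPart b]
  noncomm_ring

variable {a alo aup b blo bup : α}

theorem posPart_negPart_lower_bound_le_mul (ha₁ : alo ≤ a) (ha₂ : a ≤ aup)
    (hb₁ : blo ≤ b) (hb₂ : b ≤ bup) :
    alo⁺ * blo⁺ - aup⁺ * blo⁻ - alo⁻ * bup⁺ + aup⁻ * bup⁻ ≤ a * b := by
  have hpp : alo⁺ * blo⁺ ≤ a⁺ * b⁺ :=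
    mul_le_mul (posPart_mono ha₁) (posPart_mono hb₁) (posPart_nonneg _) (posPart_nonneg _)
  have hpn : a⁺ * b⁻ ≤ aup⁺ * blo⁻ :=
    mul_le_mul (posPart_mono ha₂) (negPart_anti hb₁) (negPart_nonneg _) (posPart_nonneg _)
  have hnp : a⁻ * b⁺ ≤ alo⁻ * bup⁺ :=
    mul_le_mul (negPart_anti ha₁) (posPart_mono hb₂) (posPart_nonneg _) (negPart_nonneg _)
  have hnn : aup⁻ * bup⁻ ≤ a⁻ * b⁻ :=
    mul_le_mul (negPart_anti ha₂) (negPart_anti hb₂) (negPart_nonneg _) (negPart_nonneg _)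
  rw [mul_eq_posPart_negPart a b]
  gcongr

theorem mul_le_posPart_negPart_upper_bound (ha₁ : alo ≤ a) (ha₂ : a ≤ aup)
    (hb₁ : blo ≤ b) (hb₂ : b ≤ bup) :
    a * b ≤ aup⁺ * bup⁺ - alo⁺ * bup⁻ - aup⁻ * blo⁺ + alo⁻ * blo⁻ := by
  have hpp : a⁺ * b⁺ ≤ aup⁺ * bup⁺ :=
    mul_le_mul (posPart_mono ha₂) (posPart_mono hb₂) (posPart_nonneg _) (posPart_nonneg _)
  have hpn : alo⁺ * bup⁻ ≤ a⁺ * b⁻ :=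
    mul_le_mul (posPart_mono ha₁) (negPart_anti hb₂) (negPart_nonneg _) (posPart_nonneg _)
  have hnp : aup⁻ * blo⁺ ≤ a⁻ * b⁺ :=
    mul_le_mul (negPart_anti ha₂) (posPart_mono hb₁) (posPart_nonneg _) (negPart_nonneg _)
  have hnn : a⁻ * b⁻ ≤ alo⁻ * blo⁻ :=
    mul_le_mul (negPart_anti ha₁) (negPart_anti hb₁) (negPart_nonneg _) (negPart_nonneg _)
  rw [mul_eq_posPart_negPart a b]
  gcongr

end IntervalMul

theorem matPos_apply {m n : ℕ} (M : Matrix (Fin m) (Fin n) ℝ) (i : Fin m) (j : Fin n) :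
    matPos M i j = (M i j)⁺ :=
  rfl

theorem matNeg_apply {m n : ℕ} (M : Matrix (Fin m) (Fin n) ℝ) (i : Fin m) (j : Fin n) :
    matNeg M i j = (M i j)⁻ := by
  change (M i j)⁺ - M i j = (M i j)⁻
  linear_combination posPart_sub_negPart (M i j)

/-- interval-matrix product bound. -/
theorem interval_times_interval_matrix_bound {m n p : ℕ}
    (A Alo Aup : Matrix (Fin m) (Fin n) ℝ) (B Blo Bup : Matrix (Fin n) (Fin p) ℝ)
    (hAlo : ∀ i j, Alo i j ≤ A i j) (hAup : ∀ i j, A i j ≤ Aup i j)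
    (hBlo : ∀ i j, Blo i j ≤ B i j) (hBup : ∀ i j, B i j ≤ Bup i j) :
    (∀ i j, (matPos Alo * matPos Blo - matPos Aup * matNeg Blo
              - matNeg Alo * matPos Bup + matNeg Aup * matNeg Bup) i j ≤ (A * B) i j) ∧
    (∀ i j, (A * B) i j ≤ (matPos Aup * matPos Bup - matPos Alo * matNeg Bup
              - matNeg Aup * matPos Blo + matNeg Alo * matNeg Blo) i j) := by
  refine ⟨fun i j => ?_, fun i j => ?_⟩ <;>
    simp only [Matrix.add_apply, Matrix.sub_apply, Matrix.mul_apply, matPos_apply, matNeg_apply,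
      ← Finset.sum_sub_distrib, ← Finset.sum_add_distrib] <;>
    refine Finset.sum_le_sum fun k _ => ?_
  · exact posPart_negPart_lower_bound_le_mul (hAlo i k) (hAup i k) (hBlo k j) (hBup k j)
  · exact mul_le_posPart_negPart_upper_bound (hAlo i k) (hAup i k) (hBlo k j) (hBup k j)
end

section
/- Let q : X ⊆ ℝⁿ → ℝ be differentiable with partial derivatives bounded: a_j ≤ ∂q/∂x_j ≤ b_j on X for all j, where X is a box (interval). Define, for x, y ∈ X, q_d(x,y) = q(x) + cᵀ(x − y) with c_j = max(−a_j, 0) for all j. Then q_d(x,x) = q(x), q_d is nondecreasing in each coordinate of its first argument, and nonincreasing in each coordinate of its second argument; hence q is mixed-monotone. -/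
open Finset

lemma fderiv_apply_eq_sum {n : ℕ} (q : (Fin n → ℝ) → ℝ) (p v : Fin n → ℝ)
    (hq : Differentiable ℝ q) :
    fderiv ℝ q p v = ∑ j, v j * fderiv ℝ q p (Pi.single j 1) := by
  have hv : v = ∑ j, v j • (Pi.single j 1 : Fin n → ℝ) := by
    ext k
    simp [Finset.sum_apply, Pi.single_apply]
  conv_lhs => rw [hv]
  rw [map_sum]
  simp [smul_eq_mul]

lemma key_mono {n : ℕ}
    (lo up : Fin n → ℝ) (q : (Fin n → ℝ) → ℝ) (a : Fin n → ℝ)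
    (hq : Differentiable ℝ q)
    (hbound : ∀ x ∈ Set.Icc lo up, ∀ j, a j ≤ fderiv ℝ q x (Pi.single j 1))
    (x₁ x₂ : Fin n → ℝ) (h₁ : x₁ ∈ Set.Icc lo up) (h₂ : x₂ ∈ Set.Icc lo up)
    (hle : x₂ ≤ x₁) :
    ∑ j, max (-(a j)) 0 * (x₂ j - x₁ j) ≤ q x₁ - q x₂ := by
  set v : Fin n → ℝ := x₁ - x₂ with hv
  have hv0 : ∀ j, 0 ≤ v j := fun j => sub_nonneg.2 (hle j)
  -- the line segment
  set γ : ℝ → (Fin n → ℝ) := fun t => x₂ + t • v with hγ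
  have hγmem : ∀ t ∈ Set.Icc (0:ℝ) 1, γ t ∈ Set.Icc lo up := by
    intro t ht
    have : γ t = (1 - t) • x₂ + t • x₁ := by
      ext k; simp [hγ, hv]; ring
    rw [this]
    exact (convex_Icc lo up) h₂ h₁ (by linarith [ht.1, ht.2]) ht.1 (by ring)
  have hγd : ∀ t : ℝ, HasDerivAt γ v t := by
    intro t
    have : HasDerivAt (fun t : ℝ => t • v) ((1:ℝ) • v) t :=
      (hasDerivAt_id t).smul_const v
    simpa only [one_smul] using this.const_add x₂
  have hg : ∀ t : ℝ, HasDerivAt (fun t => q (γ t)) (fderiv ℝ q (γ t) v) t := by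
    intro t
    exact (hq (γ t)).hasFDerivAt.comp_hasDerivAt t (hγd t)
  have hlow : ∀ t ∈ Set.Icc (0:ℝ) 1, ∑ j, a j * v j ≤ fderiv ℝ q (γ t) v := by
    intro t ht
    rw [fderiv_apply_eq_sum q (γ t) v hq]
    apply Finset.sum_le_sum
    intro j _
    rw [mul_comm (v j)]
    exact mul_le_mul_of_nonneg_right (hbound _ (hγmem t ht) j) (hv0 j)
  have hq10 : ∑ j, a j * v j ≤ q x₁ - q x₂ := by
    obtain ⟨c, hc, hceq⟩ := exists_hasDerivAt_eq_slope (fun t => q (γ t))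
      (fun t => fderiv ℝ q (γ t) v) (by norm_num : (0:ℝ) < 1)
      (fun t _ => (hg t).continuousAt.continuousWithinAt)
      (fun t _ => hg t)
    have h0 : γ 0 = x₂ := by ext k; simp [hγ]
    have h1 : γ 1 = x₁ := by ext k; simp [hγ, hv]
    rw [h0, h1] at hceq
    simp only [sub_zero, div_one] at hceq
    have := hlow c (Set.mem_Icc.2 ⟨le_of_lt hc.1, le_of_lt hc.2⟩)
    linarith
  calc ∑ j, max (-(a j)) 0 * (x₂ j - x₁ j) ≤ ∑ j, a j * v j := by
        apply Finset.sum_le_sum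
        intro j _
        have h1 : x₂ j - x₁ j = -(v j) := by simp only [hv, Pi.sub_apply]; ring
        rw [h1, mul_neg]
        have : -(max (-(a j)) 0) ≤ a j := by
          rcases le_total (a j) 0 with h | h
          · rw [max_eq_left (by linarith)]; linarith
          · rw [max_eq_right (by linarith)]; linarith
        nlinarith [hv0 j]
    _ ≤ q x₁ - q x₂ := hq10

/-- any differentiable function on a box with bounded partial derivatives is
mixed-monotone, with decomposition function q_d(x,y) = q(x) + Σ_j max(−a_j,0)(x_j − y_j). -/
theorem bounded_partials_mixed_monotone {n : ℕ}
    (lo up : Fin n → ℝ) (q : (Fin n → ℝ) → ℝ) (a b : Fin n → ℝ)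
    (hq : Differentiable ℝ q)
    (hbound : ∀ x ∈ Set.Icc lo up, ∀ j,
      a j ≤ fderiv ℝ q x (Pi.single j 1) ∧ fderiv ℝ q x (Pi.single j 1) ≤ b j) :
    let qd : (Fin n → ℝ) → (Fin n → ℝ) → ℝ :=
      fun x y => q x + ∑ j, max (-(a j)) 0 * (x j - y j)
    (∀ x, qd x x = q x) ∧
    (∀ x₁ x₂ y, x₁ ∈ Set.Icc lo up → x₂ ∈ Set.Icc lo up → y ∈ Set.Icc lo up →
      x₂ ≤ x₁ → qd x₂ y ≤ qd x₁ y) ∧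
    (∀ x y₁ y₂, x ∈ Set.Icc lo up → y₁ ∈ Set.Icc lo up → y₂ ∈ Set.Icc lo up →
      y₂ ≤ y₁ → qd x y₁ ≤ qd x y₂) := by
  intro qd
  refine ⟨fun x => by simp [qd], ?_, ?_⟩
  · intro x₁ x₂ y h₁ h₂ hy hle
    have key := key_mono lo up q a hq (fun x hx j => (hbound x hx j).1) x₁ x₂ h₁ h₂ hle
    simp only [qd]
    have : ∑ j, max (-(a j)) 0 * (x₂ j - y j) - ∑ j, max (-(a j)) 0 * (x₁ j - y j)
        = ∑ j, max (-(a j)) 0 * (x₂ j - x₁ j) := by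
      rw [← Finset.sum_sub_distrib]
      congr 1; ext j; ring
    linarith
  · intro x y₁ y₂ hx hy₁ hy₂ hle
    simp only [qd]
    have : ∑ j, max (-(a j)) 0 * (x j - y₁ j) ≤ ∑ j, max (-(a j)) 0 * (x j - y₂ j) := by
      apply Finset.sum_le_sum
      intro j _
      apply mul_le_mul_of_nonneg_left (by linarith [hle j]) (le_max_right _ _)
    linarith
end
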